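/- arXiv:2412.18087 — 3 statements merged into one kernel-verified Lean document; each statement's English description precedes it below -/
import Mathlib

section
/- Let $p_1 < p_2 < p_3$ be distinct primes and $n_1, n_2, n_3$ positive integers. Then $\sum_{i=1}^3 \frac{p_i^{n_i+1}-p_i}{p_i-1} \le \frac{1}{2}\prod_{i=1}^3 p_i^{n_i}$. -/
/-! Each geometric sum `p + ⋯ + pⁿ` is at most `2 (pⁿ - 1)` once `p ≥ 2`, and the three prime
powers are at least `2`, `3` and `4`; this reduces the claim to a polynomial inequality in the
three powers. -/

section

variable {K : Type*} [Field K] [LinearOrder K] [IsStrictOrderedRing K]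

lemma pow_succ_sub_div_sub_one_le (p : K) (n : ℕ) (hp : 2 ≤ p) :
    (p ^ (n + 1) - p) / (p - 1) ≤ 2 * (p ^ n - 1) := by
  have hpow : 1 ≤ p ^ n := one_le_pow₀ (by linarith)
  rw [div_le_iff₀ (by linarith), pow_succ]
  nlinarith [mul_nonneg (sub_nonneg.2 hpow) (sub_nonneg.2 hp)]

-- Equality holds at `(a, b, c) = (2, 3, 4)`, and the difference of the two sides increases
-- in each variable.
lemma two_mul_sub_one_add_le_half_mul {a b c : K} (ha : 2 ≤ a) (hb : 3 ≤ b) (hc : 4 ≤ c) :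
    2 * (a - 1) + 2 * (b - 1) + 2 * (c - 1) ≤ 1 / 2 * (a * b * c) := by
  have hab := mul_nonneg (sub_nonneg.2 ha) (sub_nonneg.2 hb)
  nlinarith [mul_nonneg hab (sub_nonneg.2 hc), mul_nonneg (sub_nonneg.2 ha) (sub_nonneg.2 hc),
    mul_nonneg (sub_nonneg.2 hb) (sub_nonneg.2 hc)]

end

theorem stmt_0_general (p₁ p₂ p₃ : ℕ) (n₁ n₂ n₃ : ℕ)
    (hp₁ : p₁.Prime)
    (h12 : p₁ < p₂) (h23 : p₂ < p₃)
    (hn₁ : 0 < n₁) (hn₂ : 0 < n₂) (hn₃ : 0 < n₃) :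
    ((p₁ : ℚ) ^ (n₁ + 1) - p₁) / ((p₁ : ℚ) - 1)
      + ((p₂ : ℚ) ^ (n₂ + 1) - p₂) / ((p₂ : ℚ) - 1)
      + ((p₃ : ℚ) ^ (n₃ + 1) - p₃) / ((p₃ : ℚ) - 1)
      ≤ (1 / 2 : ℚ) * ((p₁ : ℚ) ^ n₁ * (p₂ : ℚ) ^ n₂ * (p₃ : ℚ) ^ n₃) := by
  have h₁ : (2 : ℚ) ≤ p₁ := by exact_mod_cast hp₁.two_le
  have h₂ : (3 : ℚ) ≤ p₂ := by exact_mod_cast (by have := hp₁.two_le; omega : 3 ≤ p₂)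
  have h₃ : (4 : ℚ) ≤ p₃ := by exact_mod_cast (by have := hp₁.two_le; omega : 4 ≤ p₃)
  calc _ ≤ 2 * ((p₁ : ℚ) ^ n₁ - 1) + 2 * ((p₂ : ℚ) ^ n₂ - 1) + 2 * ((p₃ : ℚ) ^ n₃ - 1) := by
        gcongr <;> apply pow_succ_sub_div_sub_one_le <;> linarith
    _ ≤ _ := two_mul_sub_one_add_le_half_mul
        (h₁.trans (le_self_pow₀ (by linarith) hn₁.ne'))
        (h₂.trans (le_self_pow₀ (by linarith) hn₂.ne'))
        (h₃.trans (le_self_pow₀ (by linarith) hn₃.ne'))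

theorem stmt_0 (p₁ p₂ p₃ : ℕ) (n₁ n₂ n₃ : ℕ)
    (hp₁ : p₁.Prime) (hp₂ : p₂.Prime) (hp₃ : p₃.Prime)
    (h12 : p₁ < p₂) (h23 : p₂ < p₃)
    (hn₁ : 0 < n₁) (hn₂ : 0 < n₂) (hn₃ : 0 < n₃) :
    ((p₁ : ℚ) ^ (n₁ + 1) - p₁) / ((p₁ : ℚ) - 1)
      + ((p₂ : ℚ) ^ (n₂ + 1) - p₂) / ((p₂ : ℚ) - 1)
      + ((p₃ : ℚ) ^ (n₃ + 1) - p₃) / ((p₃ : ℚ) - 1)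
      ≤ (1 / 2 : ℚ) * ((p₁ : ℚ) ^ n₁ * (p₂ : ℚ) ^ n₂ * (p₃ : ℚ) ^ n₃) :=
  stmt_0_general p₁ p₂ p₃ n₁ n₂ n₃ hp₁ h12 h23 hn₁ hn₂ hn₃
end

section
/- Let $p_1, \dots, p_u$ be pairwise distinct primes ($u \ge 1$) and $n_1, \dots, n_u$ positive integers, and suppose $p_1^{n_1} = \min_i p_i^{n_i}$. If $\frac{p_1^{n_1}-1}{p_1-1} + \sum_{i=2}^u \frac{p_i^{n_i+1}-p_i}{p_i-1} > \frac{1}{2}\prod_{i=1}^u p_i^{n_i} - 1$, then $u \le 2$. -/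
/-! Write `q i = p i ^ n i`. Since `p / (p - 1) ≤ 2`, the right-hand side is at most
`(q₁ - 1) + 2 ∑_{i ≥ 2} (q i - 1)`. The `q i` are pairwise distinct, so for `i ≥ 2` they are
distinct integers exceeding `q₁ ≥ 2`, and once there are at least two of them an induction gives
`2 ∑_{i ≥ 2} (q i - 1) + 2 ≤ ∏_{i ≥ 2} q i =: P`. The hypothesis then reads
`q₁ P / 2 - 1 < q₁ + P - 3`, i.e. `(q₁ - 2) (P - 2) < 0`, which is impossible. -/

open Finset

theorem two_mul_sum_add_two_le_prod_add {ι : Type*} [DecidableEq ι] {s : Finset ι}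
    {f : ι → ℕ} (hf : Set.InjOn f s) (hs : 2 ≤ #s) (h3 : ∀ i ∈ s, 3 ≤ f i) :
    2 * ∑ i ∈ s, f i + 2 ≤ ∏ i ∈ s, f i + 2 * #s := by
  induction s using Finset.induction_on with
  | empty => simp at hs
  | @insert a s ha ih =>
    rw [coe_insert, Set.injOn_insert (mod_cast ha)] at hf
    rw [card_insert_of_notMem ha] at hs ⊢
    rw [sum_insert ha, prod_insert ha]
    have ha3 := h3 a (mem_insert_self a s)
    have hs3 : ∀ i ∈ s, 3 ≤ f i := fun i hi => h3 i (mem_insert_of_mem hi)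
    obtain hs1 | hs2 := Nat.lt_or_ge #s 2
    · obtain ⟨b, rfl⟩ := card_eq_one.mp (show #s = 1 by omega)
      have hb3 := hs3 b (mem_singleton_self b)
      have hab : f a ≠ f b := fun h => hf.2 ⟨b, by simp, h.symm⟩
      simp only [sum_singleton, prod_singleton, card_singleton]
      rcases hab.lt_or_gt with hab | hab <;> nlinarith
    · have hP : 3 ≤ ∏ i ∈ s, f i := by
        calc 3 ≤ 3 ^ #s := Nat.le_self_pow (by omega) 3
          _ ≤ ∏ i ∈ s, f i := pow_card_le_prod s f 3 hs3
      nlinarith [ih hf.1 hs2 hs3]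

theorem Nat.injective_prime_pow {ι : Type*} {p n : ι → ℕ} (hp : ∀ i, (p i).Prime)
    (hinj : Function.Injective p) (hn : ∀ i, n i ≠ 0) : Function.Injective fun i => p i ^ n i :=
  fun i j hij => hinj ((hp i).pow_inj' (hp j) (hn i) (hn j) hij).1

section Field

variable {K : Type*} [Field K] [LinearOrder K] [IsStrictOrderedRing K] {x y : K}

theorem sub_one_div_sub_one_le (hx : 2 ≤ x) (hy : 1 ≤ y) : (y - 1) / (x - 1) ≤ y - 1 :=
  div_le_self (by linarith) (by linarith)

theorem mul_sub_div_sub_one_le (hx : 2 ≤ x) (hy : 1 ≤ y) :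
    (y * x - x) / (x - 1) ≤ 2 * (y - 1) := by
  rw [div_le_iff₀ (by linarith)]
  nlinarith

end Field

theorem stmt_2 (u : ℕ) (hu : 0 < u) (p n : Fin u → ℕ)
    (hp : ∀ i, (p i).Prime) (hinj : Function.Injective p)
    (hn : ∀ i, 0 < n i)
    (hmin : ∀ i, p ⟨0, hu⟩ ^ n ⟨0, hu⟩ ≤ p i ^ n i)
    (h : (1 / 2 : ℚ) * (∏ i, (p i : ℚ) ^ (n i)) - 1 <
      ((p ⟨0, hu⟩ : ℚ) ^ (n ⟨0, hu⟩) - 1) / ((p ⟨0, hu⟩ : ℚ) - 1)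
        + ∑ i ∈ Finset.univ.erase ⟨0, hu⟩,
            ((p i : ℚ) ^ (n i + 1) - p i) / ((p i : ℚ) - 1)) :
    u ≤ 2 := by
  by_contra! hu3
  set z : Fin u := ⟨0, hu⟩
  set T : Finset (Fin u) := univ.erase z
  have hq_inj := Nat.injective_prime_pow hp hinj fun i => (hn i).ne'
  have hq2 : ∀ i, 2 ≤ p i ^ n i := fun i => Nat.one_lt_pow (hn i).ne' (hp i).one_lt
  have hqT : ∀ i ∈ T, 3 ≤ p i ^ n i := fun i hi =>
    (hq2 z).trans_lt ((hmin i).lt_of_ne fun h => (ne_of_mem_erase hi) (hq_inj h.symm))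
  have hT : 2 ≤ #T := by
    rw [card_erase_of_mem (mem_univ z), card_univ, Fintype.card_fin]
    omega
  have hkey : 2 * ∑ i ∈ T, (p i : ℚ) ^ n i + 2 ≤ ∏ i ∈ T, (p i : ℚ) ^ n i + 2 * #T :=
    mod_cast two_mul_sum_add_two_le_prod_add hq_inj.injOn hT hqT
  have hp2 : ∀ i, (2 : ℚ) ≤ p i := fun i => mod_cast (hp i).two_le
  have hQ2 : ∀ i, (2 : ℚ) ≤ (p i : ℚ) ^ n i := fun i => mod_cast hq2 i
  have hfirst : ((p z : ℚ) ^ n z - 1) / ((p z : ℚ) - 1) ≤ (p z : ℚ) ^ n z - 1 :=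
    sub_one_div_sub_one_le (hp2 z) (by linarith [hQ2 z])
  have hrest : ∑ i ∈ T, ((p i : ℚ) ^ (n i + 1) - p i) / ((p i : ℚ) - 1)
      ≤ ∑ i ∈ T, 2 * ((p i : ℚ) ^ n i - 1) := sum_le_sum fun i _ => by
    rw [pow_succ]
    exact mul_sub_div_sub_one_le (hp2 i) (by linarith [hQ2 i])
  rw [← mul_sum, sum_sub_distrib, sum_const, nsmul_one] at hrest
  have hP2 : (2 : ℚ) ≤ ∏ i ∈ T, (p i : ℚ) ^ n i := by
    have hsum := card_nsmul_le_sum T _ 2 fun i _ => hQ2 i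
    rw [nsmul_eq_mul] at hsum
    linarith
  rw [← mul_prod_erase _ _ (mem_univ z)] at h
  nlinarith [mul_nonneg (sub_nonneg.2 (hQ2 z)) (sub_nonneg.2 hP2)]
end

section
/- Let $G$ be a finite solvable group of order $n$ with a subgroup $H$ of order $2$ such that the degree of $H$ in the subgroup graph of $G$ is greater than $n/2 - 1$. Then $d_{L(G)^*}(H) = n/2$, $H$ is normal in $G$, $G/H$ is an elementary abelian $2$-group, $G$ is a $2$-group, and the derived subgroup $G'$ is contained in $H$. -/
/-- The degree of the vertex `H` in the subgroup graph (Hasse diagram of the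
subgroup lattice) of `G`. -/
noncomputable def subgroupGraphDegree {G : Type*} [Group G] (H : Subgroup G) : ℕ :=
  Nat.card {K : Subgroup G // K ⋖ H ∨ H ⋖ K}

lemma aux_two {G : Type*} [Group G] [Finite G] {H K : Subgroup G} (hle : H ≤ K)
    (hH : Nat.card H = 2) (hK : Nat.card K = 4) {x : G} (hxK : x ∈ K) (hxH : x ∉ H) :
    x ^ 2 ∈ H ∧ ∀ h ∈ H, x * h * x⁻¹ ∈ H := by
  have hcard : Nat.card (H.subgroupOf K) = 2 := by
    rw [Nat.card_congr (Subgroup.subgroupOfEquivOfLe hle).toEquiv]; exact hH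
  have hidx : (H.subgroupOf K).index = 2 := by
    have h1 := Subgroup.card_mul_index (H.subgroupOf K)
    rw [hcard, hK] at h1; omega
  constructor
  · have := Subgroup.sq_mem_of_index_two hidx ⟨x, hxK⟩
    rw [Subgroup.mem_subgroupOf] at this
    simpa using this
  · intro h hh
    have ha : (⟨x, hxK⟩ : K) * ⟨h, hle hh⟩ ∉ H.subgroupOf K := by
      rw [Subgroup.mem_subgroupOf]
      intro hmem
      exact hxH (by simpa using mul_mem hmem (inv_mem hh))
    have hb : (⟨x, hxK⟩ : K)⁻¹ ∉ H.subgroupOf K := by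
      rw [Subgroup.mem_subgroupOf]
      intro hmem
      exact hxH (by simpa using inv_mem hmem)
    have := (Subgroup.mul_mem_iff_of_index_two hidx
        (a := (⟨x, hxK⟩ : K) * ⟨h, hle hh⟩) (b := (⟨x, hxK⟩ : K)⁻¹)).2
        (iff_of_false ha hb)
    rw [Subgroup.mem_subgroupOf] at this
    simpa [mul_assoc] using this

/-- `G/H` elementary abelian `2`-group is encoded (given `H ⊴ G`) by
`∀ x : G, x ^ 2 ∈ H`. -/
theorem stmt_11 {G : Type*} [Group G] [Finite G] [Group.IsSolvable G]
    (H : Subgroup G) (hH : Nat.card H = 2)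
    (hdeg : ((Nat.card G : ℚ) / 2 - 1 < subgroupGraphDegree H)) :
    2 * subgroupGraphDegree H = Nat.card G ∧ H.Normal ∧
      (∀ x : G, x ^ 2 ∈ H) ∧ IsPGroup 2 G ∧ commutator G ≤ H := by
  classical
  have := Fintype.ofFinite G
  set n := Nat.card G with hn
  -- subgroups strictly below H are ⊥
  have hlt_bot : ∀ K : Subgroup G, K < H → K = ⊥ := by
    intro K hK
    have hdvd : Nat.card K ∣ Nat.card H := Subgroup.card_dvd_of_le hK.le
    rw [hH] at hdvd
    rcases (Nat.dvd_prime Nat.prime_two).mp hdvd with h | h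
    · exact Subgroup.card_eq_one.mp h
    · exact absurd (Subgroup.eq_of_le_of_card_ge hK.le (by rw [hH, h])) hK.ne
  have hbot_cov : (⊥ : Subgroup G) ⋖ H := by
    constructor
    · exact bot_lt_iff_ne_bot.mpr (fun h => by simp [h] at hH)
    · intro K h1 h2
      exact absurd (hlt_bot K h2) h1.ne'
  -- the set of covers of H
  set S : Set (Subgroup G) := {K | H ⋖ K} with hS
  have hSfin : S.Finite := Set.toFinite _
  set C : Finset (Subgroup G) := hSfin.toFinset with hC
  have hmemC : ∀ K, K ∈ C ↔ H ⋖ K := by intro K; simp [hC, hS]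
  -- degree = C.card + 1
  have hset_eq : {K : Subgroup G | K ⋖ H ∨ H ⋖ K} = insert ⊥ S := by
    ext K
    simp only [Set.mem_setOf_eq, Set.mem_insert_iff, hS]
    constructor
    · rintro (h | h)
      · exact Or.inl (hlt_bot K h.lt)
      · exact Or.inr h
    · rintro (h | h)
      · exact Or.inl (h ▸ hbot_cov)
      · exact Or.inr h
  have hbot_not : (⊥ : Subgroup G) ∉ S := by
    intro h
    exact absurd (hS ▸ h).lt (by simp)
  have hdeg_eq : subgroupGraphDegree H = C.card + 1 := by
    have : subgroupGraphDegree H = Nat.card {K : Subgroup G // K ∈ {K : Subgroup G | K ⋖ H ∨ H ⋖ K}} := rfl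
    rw [this, Nat.card_coe_set_eq, hset_eq, Set.ncard_insert_of_notMem hbot_not,
      Set.ncard_eq_toFinset_card S hSfin]
  -- covers are strictly above H
  have hcovC : ∀ K ∈ C, H < K := fun K hK => ((hmemC K).1 hK).lt
  have hcard_ge : ∀ K ∈ C, 4 ≤ Nat.card K := by
    intro K hK
    have hdvd : (2 : ℕ) ∣ Nat.card K := hH ▸ Subgroup.card_dvd_of_le (hcovC K hK).le
    have hne : Nat.card K ≠ 2 := fun hc =>
      (hcovC K hK).ne (Subgroup.eq_of_le_of_card_ge (hcovC K hK).le (by rw [hH, hc]))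
    have hpos : 0 < Nat.card K := Nat.card_pos
    omega
  -- element sets
  set T : Subgroup G → Finset G := fun K => Finset.univ.filter (fun x => x ∈ K ∧ x ∉ H) with hT
  have hHcard : (Finset.univ.filter (fun x : G => x ∈ H)).card = 2 := by
    rw [← hH, Nat.card_eq_fintype_card, Fintype.card_subtype]
  have hTcard : ∀ K : Subgroup G, H ≤ K → (T K).card + 2 = Nat.card K := by
    intro K hle
    have h1 : (Finset.univ.filter (fun x : G => x ∈ K)).card = Nat.card K := by
      rw [Nat.card_eq_fintype_card, Fintype.card_subtype]
    have h2 := Finset.card_filter_add_card_filter_not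
      (s := Finset.univ.filter (fun x : G => x ∈ K)) (p := fun x : G => x ∉ H)
    rw [Finset.filter_filter, Finset.filter_filter] at h2
    have h3 : Finset.univ.filter (fun x : G => x ∈ K ∧ ¬x ∉ H)
        = Finset.univ.filter (fun x : G => x ∈ H) := by
      ext x
      simp only [Finset.mem_filter, Finset.mem_univ, true_and, not_not]
      exact ⟨fun h => h.2, fun h => ⟨hle h, h⟩⟩
    rw [h3, hHcard, h1] at h2
    exact h2
  -- pairwise intersections
  have hinter : ∀ K₁ ∈ C, ∀ K₂ ∈ C, K₁ ≠ K₂ → K₁ ⊓ K₂ = H := by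
    intro K₁ hK₁ K₂ hK₂ hne
    have h1 := (hmemC K₁).1 hK₁
    have h2 := (hmemC K₂).1 hK₂
    have hle : H ≤ K₁ ⊓ K₂ := le_inf h1.lt.le h2.lt.le
    by_contra hcon
    have hlt : H < K₁ ⊓ K₂ := hle.lt_of_ne (Ne.symm hcon)
    have hnlt : ¬(K₁ ⊓ K₂ < K₁) := h1.2 hlt
    have heq : K₁ ⊓ K₂ = K₁ := ((lt_or_eq_of_le inf_le_left).resolve_left hnlt)
    have hK12 : K₁ ≤ K₂ := inf_eq_left.mp heq
    exact h2.2 h1.lt (hK12.lt_of_ne hne)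
  have hdisj : ∀ K₁ ∈ C, ∀ K₂ ∈ C, K₁ ≠ K₂ → Disjoint (T K₁) (T K₂) := by
    intro K₁ hK₁ K₂ hK₂ hne
    rw [Finset.disjoint_left]
    intro x hx1 hx2
    simp only [hT, Finset.mem_filter, Finset.mem_univ, true_and] at hx1 hx2
    have : x ∈ K₁ ⊓ K₂ := ⟨hx1.1, hx2.1⟩
    rw [hinter K₁ hK₁ K₂ hK₂ hne] at this
    exact hx1.2 this
  have hsub : C.biUnion T ⊆ Finset.univ.filter (fun x : G => x ∉ H) := by
    intro x hx
    obtain ⟨K, _, hxK⟩ := Finset.mem_biUnion.mp hx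
    simp only [hT, Finset.mem_filter, Finset.mem_univ, true_and] at hxK ⊢
    exact hxK.2
  have hcompl : (Finset.univ.filter (fun x : G => x ∉ H)).card + 2 = n := by
    have h2 := Finset.card_filter_add_card_filter_not
      (s := (Finset.univ : Finset G)) (p := fun x : G => x ∈ H)
    rw [hHcard, Finset.card_univ, ← Nat.card_eq_fintype_card] at h2
    omega
  have h2le : ∀ K ∈ C, 2 ≤ (T K).card := by
    intro K hK
    have := hTcard K (hcovC K hK).le
    have := hcard_ge K hK
    omega
  have hbi := Finset.card_biUnion hdisj
  have hsum_le : ∑ K ∈ C, (T K).card ≤ n - 2 := by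
    rw [← hbi]
    have := Finset.card_le_card hsub
    omega
  have hlow : 2 * C.card ≤ ∑ K ∈ C, (T K).card := by
    have := Finset.card_nsmul_le_sum C (fun K => (T K).card) 2 h2le
    simpa [smul_eq_mul, mul_comm] using this
  have h2n : (2 : ℕ) ∣ n := hH ▸ Subgroup.card_subgroup_dvd_card H
  have hnat : n < 2 * C.card + 4 := by
    rw [hdeg_eq] at hdeg
    have hq : (n : ℚ) < 2 * C.card + 4 := by push_cast at hdeg ⊢; linarith
    exact_mod_cast hq
  have hnpos : 0 < n := Nat.card_pos
  have hC2 : 2 * C.card + 2 = n := by omega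
  have hsum_eq : ∑ K ∈ C, (T K).card = 2 * C.card := le_antisymm (by omega) hlow
  have hT2 : ∀ K ∈ C, (T K).card = 2 := by
    have hconst : ∑ _K ∈ C, (2 : ℕ) = ∑ K ∈ C, (T K).card := by
      rw [Finset.sum_const, smul_eq_mul, hsum_eq]; ring
    intro K hK
    exact ((Finset.sum_eq_sum_iff_of_le h2le).1 hconst K hK).symm
  have hK4 : ∀ K ∈ C, Nat.card K = 4 := by
    intro K hK
    have := hTcard K (hcovC K hK).le
    rw [hT2 K hK] at this
    omega
  have hcover : C.biUnion T = Finset.univ.filter (fun x : G => x ∉ H) := by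
    apply Finset.eq_of_subset_of_card_le hsub
    rw [← hbi] at hsum_eq
    omega
  have key : ∀ x : G, x ∉ H → x ^ 2 ∈ H ∧ ∀ h ∈ H, x * h * x⁻¹ ∈ H := by
    intro x hx
    have hxbi : x ∈ C.biUnion T := by
      rw [hcover]; simp [hx]
    obtain ⟨K, hKC, hxT⟩ := Finset.mem_biUnion.mp hxbi
    simp only [hT, Finset.mem_filter, Finset.mem_univ, true_and] at hxT
    exact aux_two (hcovC K hKC).le hH (hK4 K hKC) hxT.1 hx
  have hsq : ∀ x : G, x ^ 2 ∈ H := by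
    intro x
    by_cases hx : x ∈ H
    · simpa [pow_two] using mul_mem hx hx
    · exact (key x hx).1
  have hnormal : H.Normal := by
    constructor
    intro h hh x
    by_cases hx : x ∈ H
    · exact mul_mem (mul_mem hx hh) (inv_mem hx)
    · exact (key x hx).2 h hh
  have hsqH : ∀ h ∈ H, h ^ 2 = 1 := by
    intro h hh
    have h1 : ((⟨h, hh⟩ : H) : H) ^ 2 = 1 := by rw [← hH]; exact pow_card_eq_one'
    have := congrArg (Subtype.val) h1
    push_cast at this
    exact this
  refine ⟨by rw [hdeg_eq]; omega, hnormal, hsq, ?_, ?_⟩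
  · intro g
    exact ⟨2, by rw [show (2 : ℕ) ^ 2 = 2 * 2 from rfl, pow_mul]; exact hsqH _ (hsq g)⟩
  · haveI := hnormal
    have hq1 : ∀ a : G ⧸ H, a ^ 2 = 1 := by
      intro a
      obtain ⟨x, rfl⟩ := QuotientGroup.mk_surjective a
      rw [← QuotientGroup.mk_pow, QuotientGroup.eq_one_iff]
      exact hsq x
    have hinv : ∀ c : G ⧸ H, c⁻¹ = c := fun c =>
      inv_eq_of_mul_eq_one_right (by rw [← sq]; exact hq1 c)
    have habel : ∀ a b : G ⧸ H, a * b = b * a := by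
      intro a b
      calc a * b = (a * b)⁻¹ := (hinv _).symm
        _ = b⁻¹ * a⁻¹ := mul_inv_rev _ _
        _ = b * a := by rw [hinv, hinv]
    rw [commutator_def, Subgroup.commutator_le]
    intro g _ h _
    rw [← QuotientGroup.eq_one_iff]
    open scoped commutatorElement in
    show ((⁅g, h⁆ : G) : G ⧸ H) = 1
    rw [commutatorElement_def]
    simp only [QuotientGroup.mk_mul, QuotientGroup.mk_inv]
    rw [habel ((g : G ⧸ H)) ((h : G ⧸ H))]
    group
end
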